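/- Let K be a commutative ring and A a nonunital associative K-algebra. Let U be the quotient of the tensor algebra Tens_K(A ⊕ A) by the two-sided ideal generated by the elements r_a·r_b − r_{ab}, l_a·r_b − r_b·l_a, and l_{ab} − l_b·l_a for all a, b ∈ A, where l_a (resp. r_a) denotes the image in the tensor algebra of (a,0) (resp. (0,a)). Let A₊ denote the unitization of A, the unital associative K-algebra K ⊕ A with product (p,a)(q,b) = (pq, pb + qa + ab). Then there is an isomorphism of unital K-algebras U ≅ (A₊)ᵒᵖ ⊗_K A₊ carrying the class of l_a to aᵒᵖ ⊗ 1 and the class of r_b to 1 ⊗ b. -/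

import Mathlib

noncomputable section

open scoped TensorProduct

/-- `l_a ∈ Tens_K(A ⊕ A)`. -/
def lT (K A : Type) [CommRing K] [NonUnitalRing A] [Module K A] (a : A) :
    TensorAlgebra K (A × A) :=
  TensorAlgebra.ι K (a, 0)

/-- `r_a ∈ Tens_K(A ⊕ A)`. -/
def rT (K A : Type) [CommRing K] [NonUnitalRing A] [Module K A] (a : A) :
    TensorAlgebra K (A × A) :=
  TensorAlgebra.ι K (0, a)

/-- The relations defining the universal enveloping algebra of an associative algebra:
quotienting by this relation is the same as quotienting by the two-sided ideal generated
by `r_a·r_b − r_{ab}`, `l_a·r_b − r_b·l_a`, `l_{ab} − l_b·l_a`. -/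
inductive AssRel (K A : Type) [CommRing K] [NonUnitalRing A] [Module K A] :
    TensorAlgebra K (A × A) → TensorAlgebra K (A × A) → Prop
  | rr (a b : A) : AssRel K A (rT K A a * rT K A b) (rT K A (a * b))
  | lr (a b : A) : AssRel K A (lT K A a * rT K A b) (rT K A b * lT K A a)
  | ll (a b : A) : AssRel K A (lT K A (a * b)) (lT K A b * lT K A a)

/-!
The relations say precisely that `b ↦ [r_b]` is a nonunital algebra map `A → U`, that
`a ↦ [l_a]` is one `A → Uᵐᵒᵖ`, and that their images commute. The universal properties of the
unitization and of the tensor product of algebras then give `(A₊)ᵐᵒᵖ ⊗ A₊ → U`. Conversely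
`l_a ↦ aᵒᵖ ⊗ 1`, `r_b ↦ 1 ⊗ b` respects the relations, and the two maps are mutually inverse
because both composites fix generators.
-/

open MulOpposite Unitization

namespace Unitization

variable {R A C : Type*} [CommSemiring R] [NonUnitalSemiring A] [Module R A]
  [SMulCommClass R A A] [IsScalarTower R A A] [Semiring C] [Algebra R C]

theorem algHom_ext_op {φ ψ : (Unitization R A)ᵐᵒᵖ →ₐ[R] C}
    (h : ∀ a : A, φ (op (a : Unitization R A)) = ψ (op (a : Unitization R A))) : φ = ψ :=
  AlgHom.opComm.symm.injective <| algHom_ext'' fun a => congrArg op (h a)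

end Unitization

namespace UAss

section Generators

variable (K A : Type) [CommRing K] [NonUnitalRing A] [Module K A]

def mkRHom : A →ₙₐ[K] RingQuot (AssRel K A) :=
  { (RingQuot.mkAlgHom K (AssRel K A)).toLinearMap ∘ₗ TensorAlgebra.ι K ∘ₗ LinearMap.inr K A A with
    map_zero' := LinearMap.map_zero _
    map_mul' a b := (RingQuot.mkAlgHom_rel K (AssRel.rr a b)).symm.trans (map_mul _ _ _) }

def mkLHom : A →ₙₐ[K] (RingQuot (AssRel K A))ᵐᵒᵖ :=
  { (opLinearEquiv K).toLinearMap ∘ₗ (RingQuot.mkAlgHom K (AssRel K A)).toLinearMap ∘ₗ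
      TensorAlgebra.ι K ∘ₗ LinearMap.inl K A A with
    map_zero' := LinearMap.map_zero _
    map_mul' a b := congrArg op <|
      (RingQuot.mkAlgHom_rel K (AssRel.ll a b)).trans (map_mul _ _ _) }

theorem mkRHom_apply (b : A) : mkRHom K A b = RingQuot.mkAlgHom K (AssRel K A) (rT K A b) := rfl

theorem mkLHom_apply (a : A) :
    mkLHom K A a = op (RingQuot.mkAlgHom K (AssRel K A) (lT K A a)) := rfl

end Generators

variable (K A : Type) [CommRing K] [NonUnitalRing A] [Module K A]
  [IsScalarTower K A A] [SMulCommClass K A A]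

def tensorGen : A × A →ₗ[K] (Unitization K A)ᵐᵒᵖ ⊗[K] Unitization K A :=
  LinearMap.coprod
    (Algebra.TensorProduct.includeLeft.toLinearMap ∘ₗ (opLinearEquiv K).toLinearMap ∘ₗ inrHom K K A)
    (Algebra.TensorProduct.includeRight.toLinearMap ∘ₗ inrHom K K A)

theorem lift_tensorGen_lT (a : A) :
    TensorAlgebra.lift K (tensorGen K A) (lT K A a) = op (a : Unitization K A) ⊗ₜ[K] 1 := by
  simp [lT, tensorGen]

theorem lift_tensorGen_rT (b : A) :
    TensorAlgebra.lift K (tensorGen K A) (rT K A b) = 1 ⊗ₜ[K] (b : Unitization K A) := by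
  simp [rT, tensorGen]

def toTensor : RingQuot (AssRel K A) →ₐ[K] (Unitization K A)ᵐᵒᵖ ⊗[K] Unitization K A :=
  RingQuot.liftAlgHom K ⟨TensorAlgebra.lift K (tensorGen K A), fun _ _ h => by
    cases h <;> simp only [map_mul, lift_tensorGen_lT, lift_tensorGen_rT,
      Algebra.TensorProduct.tmul_mul_tmul, one_mul, mul_one, inr_mul, op_mul]⟩

theorem toTensor_mk_lT (a : A) :
    toTensor K A (RingQuot.mkAlgHom K (AssRel K A) (lT K A a)) =
      op (a : Unitization K A) ⊗ₜ[K] 1 := by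
  rw [toTensor, RingQuot.liftAlgHom_mkAlgHom_apply, lift_tensorGen_lT]

theorem toTensor_mk_rT (b : A) :
    toTensor K A (RingQuot.mkAlgHom K (AssRel K A) (rT K A b)) =
      1 ⊗ₜ[K] (b : Unitization K A) := by
  rw [toTensor, RingQuot.liftAlgHom_mkAlgHom_apply, lift_tensorGen_rT]

def ofOpUnitization : (Unitization K A)ᵐᵒᵖ →ₐ[K] RingQuot (AssRel K A) :=
  AlgHom.opComm (lift (mkLHom K A))

def ofUnitization : Unitization K A →ₐ[K] RingQuot (AssRel K A) :=
  lift (mkRHom K A)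

theorem ofOpUnitization_op (x : Unitization K A) :
    ofOpUnitization K A (op x) =
      algebraMap K _ x.fst + RingQuot.mkAlgHom K (AssRel K A) (lT K A x.snd) := by
  simp [ofOpUnitization, mkLHom_apply]

theorem ofUnitization_apply (y : Unitization K A) :
    ofUnitization K A y =
      algebraMap K _ y.fst + RingQuot.mkAlgHom K (AssRel K A) (rT K A y.snd) := by
  simp [ofUnitization, mkRHom_apply]

theorem commute_ofOpUnitization_ofUnitization (x : (Unitization K A)ᵐᵒᵖ) (y : Unitization K A) :
    Commute (ofOpUnitization K A x) (ofUnitization K A y) := by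
  induction x using MulOpposite.rec' with | h x => ?_
  rw [ofOpUnitization_op, ofUnitization_apply]
  refine .add_left (.add_right ?_ ?_) (.add_right ?_ ?_)
  · exact Algebra.commute_algebraMap_left _ _
  · exact Algebra.commute_algebraMap_left _ _
  · exact Algebra.commute_algebraMap_right _ _
  · exact (map_mul _ _ _).symm.trans <|
      (RingQuot.mkAlgHom_rel K (AssRel.lr x.snd y.snd)).trans (map_mul _ _ _)

def ofTensor : (Unitization K A)ᵐᵒᵖ ⊗[K] Unitization K A →ₐ[K] RingQuot (AssRel K A) :=
  Algebra.TensorProduct.lift (ofOpUnitization K A) (ofUnitization K A)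
    (commute_ofOpUnitization_ofUnitization K A)

theorem ofTensor_op_tmul_one (a : A) :
    ofTensor K A (op (a : Unitization K A) ⊗ₜ[K] 1) =
      RingQuot.mkAlgHom K (AssRel K A) (lT K A a) := by
  simp [ofTensor, ofOpUnitization_op]

theorem ofTensor_one_tmul (b : A) :
    ofTensor K A (1 ⊗ₜ[K] (b : Unitization K A)) =
      RingQuot.mkAlgHom K (AssRel K A) (rT K A b) := by
  simp [ofTensor, ofUnitization_apply]

theorem toTensor_comp_ofTensor :
    (toTensor K A).comp (ofTensor K A) = AlgHom.id K _ := by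
  refine Algebra.TensorProduct.ext (algHom_ext_op fun a => ?_) (algHom_ext'' fun b => ?_)
  · simp only [AlgHom.comp_apply, Algebra.TensorProduct.includeLeft_apply, AlgHom.id_apply,
      ofTensor_op_tmul_one, toTensor_mk_lT]
  · simp only [AlgHom.comp_apply, AlgHom.restrictScalars_apply,
      Algebra.TensorProduct.includeRight_apply, AlgHom.id_apply, ofTensor_one_tmul, toTensor_mk_rT]

theorem ofTensor_comp_toTensor :
    (ofTensor K A).comp (toTensor K A) = AlgHom.id K _ := by
  ext a
  · exact congrArg (ofTensor K A) (toTensor_mk_lT K A a) |>.trans (ofTensor_op_tmul_one K A a)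
  · exact congrArg (ofTensor K A) (toTensor_mk_rT K A a) |>.trans (ofTensor_one_tmul K A a)

def equivTensor :
    RingQuot (AssRel K A) ≃ₐ[K] (Unitization K A)ᵐᵒᵖ ⊗[K] Unitization K A :=
  AlgEquiv.ofAlgHom (toTensor K A) (ofTensor K A) (toTensor_comp_ofTensor K A)
    (ofTensor_comp_toTensor K A)

end UAss

/-- The universal enveloping algebra of a nonunital associative `K`-algebra `A` is the
extended algebra `(A₊)ᵒᵖ ⊗_K A₊`, via `l_a ↦ aᵒᵖ ⊗ 1` and `r_b ↦ 1 ⊗ b`. -/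
theorem uAss_iso (K A : Type) [CommRing K] [NonUnitalRing A] [Module K A]
    [IsScalarTower K A A] [SMulCommClass K A A] :
    ∃ e : RingQuot (AssRel K A) ≃ₐ[K] (Unitization K A)ᵐᵒᵖ ⊗[K] Unitization K A,
      (∀ a : A, e (RingQuot.mkAlgHom K (AssRel K A) (lT K A a)) =
        MulOpposite.op (a : Unitization K A) ⊗ₜ[K] 1) ∧
      (∀ b : A, e (RingQuot.mkAlgHom K (AssRel K A) (rT K A b)) =
        1 ⊗ₜ[K] (b : Unitization K A)) :=
  ⟨UAss.equivTensor K A, UAss.toTensor_mk_lT K A, UAss.toTensor_mk_rT K A⟩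

end
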